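/- Let ℓ ≥ 1, let h ≥ 3, and let G_1, …, G_q ∈ U_ℓ be 3-graphs each on at most h vertices, and set t = Σ_{i=1}^q v(G_i). Then r(G_1, …, G_q) ≤ (qh)^{q^{ℓ−1} · h^{2ℓ} · t}. -/

import Mathlib

/-- A 3-uniform hypergraph with vertices drawn from ℕ. -/
structure ThreeGraph where
  verts : Finset ℕ
  edges : Finset (Finset ℕ)
  edge_card : ∀ e ∈ edges, e.card = 3
  edge_sub : ∀ e ∈ edges, e ⊆ verts

/-- A 3-graph is tripartite if its vertex set can be partitioned into three parts so that
every edge has exactly one vertex in each part. -/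
def Tripartite (G : ThreeGraph) : Prop :=
  ∃ V1 V2 V3 : Finset ℕ,
    Disjoint V1 V2 ∧ Disjoint V1 V3 ∧ Disjoint V2 V3 ∧
    V1 ∪ V2 ∪ V3 = G.verts ∧
    ∀ e ∈ G.edges, (e ∩ V1).card = 1 ∧ (e ∩ V2).card = 1 ∧ (e ∩ V3).card = 1

/-- Membership in the family 𝒰₁: there is a vertex subset intersecting every edge in
exactly one vertex. -/
def InU1 (G : ThreeGraph) : Prop :=
  ∃ W : Finset ℕ, W ⊆ G.verts ∧ ∀ e ∈ G.edges, (e ∩ W).card = 1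

/-- `Reducible G H F` : `G` is reducible to the pair `(H, F)` by collapsing a collapsible
set `U` (with `F = G[U]`), where the new vertex of `H` is `v`. -/
def Reducible (G H F : ThreeGraph) : Prop :=
  ∃ (U : Finset ℕ) (v : ℕ),
    U ⊆ G.verts ∧ 2 ≤ U.card ∧ U.card < G.verts.card ∧
    (∀ e ∈ G.edges, (e ∩ U).card ≠ 2) ∧
    v ∉ G.verts ∧
    H.verts = (G.verts \ U) ∪ {v} ∧
    H.edges = G.edges.filter (fun e => e ∩ U = ∅) ∪
      (G.edges.filter (fun e => (e ∩ U).card = 1)).image (fun e => (e \ U) ∪ {v}) ∧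
    F.verts = U ∧
    F.edges = G.edges.filter (fun e => e ⊆ U)

/-- `MemU i G` means `G ∈ 𝒰ᵢ`: `𝒰₀` is the family of tripartite 3-graphs, `𝒰₁` of 3-graphs
with a vertex set meeting every edge exactly once, the families are nested, and for `i ≥ 2`,
`G ∈ 𝒰ᵢ` whenever `G` is reducible to `(H, F)` with `H ∈ 𝒰ᵢ₋₁` and `F ∈ 𝒰ᵢ`. -/
inductive MemU : ℕ → ThreeGraph → Prop where
  | zero (G : ThreeGraph) : Tripartite G → MemU 0 G
  | one (G : ThreeGraph) : InU1 G → MemU 1 G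
  | mono (i : ℕ) (G : ThreeGraph) : MemU i G → MemU (i + 1) G
  | reduce (i : ℕ) (G H F : ThreeGraph) :
      Reducible G H F → MemU (i + 1) H → MemU (i + 2) F → MemU (i + 2) G

/-- `G ∈ 𝒰 = ⋃ᵢ 𝒰ᵢ`. -/
def InU (G : ThreeGraph) : Prop := ∃ i, MemU i G

/-- A monochromatic copy of `G` in color `i` under the coloring `χ` of the triples of
`Fin N`. -/
def MonoCopy {N q : ℕ} (χ : Finset (Fin N) → Fin q) (i : Fin q) (G : ThreeGraph) : Prop :=
  ∃ f : ℕ → Fin N, Set.InjOn f ↑G.verts ∧ ∀ e ∈ G.edges, χ (e.image f) = i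

/-- `N` vertices suffice to find, in any `q`-coloring, a monochromatic copy of `Gs i` in
color `i` for some `i`. -/
def RamseyProp {q : ℕ} (Gs : Fin q → ThreeGraph) (N : ℕ) : Prop :=
  ∀ χ : Finset (Fin N) → Fin q, ∃ i : Fin q, MonoCopy χ i (Gs i)

/-- The Ramsey number `r(G₁, …, G_q)`. -/
noncomputable def ramseyNumber {q : ℕ} (Gs : Fin q → ThreeGraph) : ℕ :=
  sInf {N | RamseyProp Gs N}

/-- The `q`-color Ramsey number `r(G; q)`. -/
noncomputable def rq (G : ThreeGraph) (q : ℕ) : ℕ :=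
  ramseyNumber (fun _ : Fin q => G)

/-!
Induction on `ℓ`.

For `ℓ = 1` every edge of `G` has the form `{w, x, y}` with `w` in the set `W` meeting every
edge once, so it suffices to find a colour `i`, a set `T` of `h` vertices and `h` further
vertices `y` such that every triple `{a, b, y}` with `a ≠ b ∈ T` has colour `i`. Inside a fixed
set of `(2q)^(qh)` vertices, the multicolour Ramsey theorem for graphs gives every outside
vertex `y` a set `T_y` of size `h` that is monochromatic for the link colouring
`{a, b} ↦ χ {a, b, y}`; pigeonhole over the pairs (colour, `T_y`) then provides `h` vertices
`y` sharing the same pair.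

For `ℓ ≥ 2`, each `Gⱼ` outside `𝒰_{ℓ-1}` is reducible to some `(Hⱼ, Fⱼ)`; let `vⱼ` be the
vertex of `Hⱼ` replacing the collapsed set. Every `p`-set, with `p ≥ r(H₁, …, H_q)`, contains
a monochromatic copy of some `Hⱼ`, and such a copy is determined by where it sends `Hⱼ - vⱼ`
and `vⱼ`. Double counting over all `p`-sets shows that some copy of some `Hⱼ` in colour `j`
admits more than `n + h` positions for `vⱼ` keeping the edges at `vⱼ` in colour `j`, where
`n` bounds the Ramsey number of the family with `Gⱼ` replaced by `Fⱼ`. That family has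
smaller total size, so by induction on `∑ v(Gᵢ)` the admissible positions outside the copy
contain a copy of some `Gᵢ` in colour `i ≠ j`, or a copy of `Fⱼ` in colour `j`, which takes
the place of `vⱼ` to form a copy of `Gⱼ`.
-/

open Finset

lemma exists_mapsTo_injOn_of_card_le {α β : Type*} [Nonempty β] {s : Finset α} {t : Finset β}
    (h : #s ≤ #t) : ∃ f : α → β, Set.MapsTo f s t ∧ Set.InjOn f s := by
  obtain ⟨f, hmaps, hinj⟩ := s.finite_toSet.exists_injOn_of_encard_le (t := (t : Set β))
    (by simpa only [Set.encard_coe_eq_coe_finsetCard] using Nat.cast_le.mpr h)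
  exact ⟨f, hmaps, hinj⟩

lemma Finset.injOn_piecewise {α β : Type*} [DecidableEq α] {S : Set α} {s : Finset α}
    {f g : α → β} {A B : Set β} (hf : Set.InjOn f (S ∩ s)) (hg : Set.InjOn g (S \ s))
    (hfA : Set.MapsTo f (S ∩ s) A) (hgB : Set.MapsTo g (S \ s) B) (hAB : Disjoint A B) :
    Set.InjOn (s.piecewise f g) S := by
  rw [← Set.inter_union_sdiff S s, Set.injOn_union Set.disjoint_sdiff_inter.symm]
  refine ⟨hf.congr fun x hx => (s.piecewise_eq_of_mem _ _ hx.2).symm,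
    hg.congr fun x hx => (s.piecewise_eq_of_notMem _ _ hx.2).symm, fun x hx y hy hxy => ?_⟩
  rw [s.piecewise_eq_of_mem _ _ hx.2, s.piecewise_eq_of_notMem _ _ hy.2] at hxy
  exact hAB.ne_of_mem (hfA hx) (hgB hy) hxy

lemma Finset.exists_eq_triple_of_card_inter_eq_one {α : Type*} [DecidableEq α] {e W : Finset α}
    (he : #e = 3) (hW : #(e ∩ W) = 1) :
    ∃ w x y, e = {w, x, y} ∧ w ∈ W ∧ x ∉ W ∧ y ∉ W ∧ x ≠ y := by
  obtain ⟨w, hw⟩ := card_eq_one.mp hW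
  have hwe : w ∈ e ∩ W := hw ▸ mem_singleton_self w
  obtain ⟨x, y, hxy, hexy⟩ := card_eq_two.mp
    (show #(e.erase w) = 2 by rw [card_erase_of_mem (mem_inter.mp hwe).1, he])
  have hout : ∀ z ∈ e.erase w, z ∉ W := fun z hz hzW => ne_of_mem_erase hz <|
    mem_singleton.mp (hw ▸ mem_inter.mpr ⟨mem_of_mem_erase hz, hzW⟩)
  refine ⟨w, x, y, ?_, (mem_inter.mp hwe).2, hout x (by simp [hexy]), hout y (by simp [hexy]), hxy⟩
  rw [← insert_erase (mem_inter.mp hwe).1, hexy]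

lemma exists_injective_seq_color_eq {V : Type*} [DecidableEq V] {q : ℕ} (hq : 0 < q)
    (c : V → V → Fin q) (L : ℕ) {S : Finset V} (hS : (2 * q) ^ L ≤ #S) :
    ∃ (x : Fin L → V) (col : Fin L → Fin q), x.Injective ∧ (∀ a, x a ∈ S) ∧
      ∀ a b, a < b → c (x a) (x b) = col a := by
  induction L generalizing S with
  | zero => exact ⟨finZeroElim, finZeroElim, fun a => a.elim0, fun a => a.elim0, fun a => a.elim0⟩
  | succ L ih =>
    obtain ⟨x₀, hx₀⟩ := card_pos.mp (lt_of_lt_of_le (by positivity) hS)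
    obtain ⟨i₀, -, hfiber⟩ := exists_le_card_fiber_of_mul_le_card_of_maps_to
      (f := c x₀) (s := S.erase x₀) (t := univ) (n := (2 * q) ^ L) (fun _ _ => mem_univ _)
      (univ_nonempty_iff.mpr ⟨⟨0, hq⟩⟩) (by
        rw [card_erase_of_mem hx₀, card_univ, Fintype.card_fin]
        have : (2 * q) ^ (L + 1) = q * (2 * q) ^ L + q * (2 * q) ^ L := by ring
        have : 0 < q * (2 * q) ^ L := by positivity
        omega)
    obtain ⟨x, col, hinj, hxS, hcol⟩ := ih hfiber
    have hx : ∀ a, x a ∈ S.erase x₀ ∧ c x₀ (x a) = i₀ := fun a => mem_filter.mp (hxS a)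
    refine ⟨Fin.cons x₀ x, Fin.cons i₀ col,
      Fin.cons_injective_iff.mpr ⟨fun ⟨a, ha⟩ => ne_of_mem_erase (hx a).1 ha, hinj⟩,
      Fin.cases hx₀ fun a => mem_of_mem_erase (hx a).1, fun a b hab => ?_⟩
    induction b using Fin.cases with
    | zero => exact absurd hab (Fin.not_lt_zero a)
    | succ b =>
      induction a using Fin.cases with
      | zero => simpa using (hx b).2
      | succ a => simpa using hcol a b (Fin.succ_lt_succ_iff.mp hab)

theorem exists_pairwise_color_eq {V : Type*} [DecidableEq V] {q k : ℕ} (hq : 0 < q)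
    (c : V → V → Fin q) (hc : ∀ u v, c u v = c v u) {S : Finset V}
    (hS : (2 * q) ^ (q * k) ≤ #S) :
    ∃ i, ∃ T ⊆ S, #T = k ∧ (T : Set V).Pairwise fun u v => c u v = i := by
  obtain ⟨x, col, hinj, hxS, hcol⟩ := exists_injective_seq_color_eq hq c (q * k) hS
  obtain ⟨i, -, hfiber⟩ := exists_le_card_fiber_of_mul_le_card_of_maps_to
    (f := col) (s := univ) (t := univ) (n := k) (fun _ _ => mem_univ _)
    (univ_nonempty_iff.mpr ⟨⟨0, hq⟩⟩) (by simp)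
  obtain ⟨T, hT, hTk⟩ := exists_subset_card_eq
    (hfiber.trans_eq (card_image_of_injective _ hinj).symm)
  refine ⟨i, T, fun u hu => ?_, hTk, fun u hu v hv huv => ?_⟩
  · obtain ⟨a, -, rfl⟩ := mem_image.mp (hT hu)
    exact hxS a
  · obtain ⟨a, ha, rfl⟩ := mem_image.mp (hT hu)
    obtain ⟨b, hb, rfl⟩ := mem_image.mp (hT hv)
    rcases lt_or_gt_of_ne (hinj.ne_iff.mp huv) with hab | hab
    · rw [hcol a b hab, (mem_filter.mp ha).2]
    · rw [hc, hcol b a hab, (mem_filter.mp hb).2]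

-- The proportion of the `p`-subsets of an `N`-set that contain a given `w`-set is at most
-- `(p / N) ^ w`.
lemma pow_mul_choose_sub_le {w p N : ℕ} (hwp : w ≤ p) (hpN : p ≤ N) :
    N ^ w * (N - w).choose (p - w) ≤ p ^ w * N.choose p := by
  induction w with
  | zero => simp
  | succ w ih =>
    have hpascal : (N - w) * (N - (w + 1)).choose (p - (w + 1))
        = (N - w).choose (p - w) * (p - w) := by
      have := Nat.add_one_mul_choose_eq (N - (w + 1)) (p - (w + 1))
      rwa [show N - (w + 1) + 1 = N - w by omega, show p - (w + 1) + 1 = p - w by omega] at this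
    have hNp : N * (p - w) ≤ (N - w) * p := by
      have := Nat.mul_le_mul_left w hpN
      rw [Nat.mul_sub, Nat.sub_mul, mul_comm N p, mul_comm N w]
      omega
    refine Nat.le_of_mul_le_mul_left ?_ (show 0 < N - w by omega)
    calc (N - w) * (N ^ (w + 1) * (N - (w + 1)).choose (p - (w + 1)))
        = N * (p - w) * (N ^ w * (N - w).choose (p - w)) := by rw [pow_succ]; grind
      _ ≤ (N - w) * p * (p ^ w * N.choose p) := Nat.mul_le_mul hNp (ih (by omega))
      _ = (N - w) * (p ^ (w + 1) * N.choose p) := by ring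

lemma choose_le_sum_choose_of_forall_exists_subset {α β : Type*} [Fintype α] [DecidableEq α]
    {p : ℕ} (C : Finset β) (R : β → Finset α)
    (hcover : ∀ P : Finset α, #P = p → ∃ c ∈ C, R c ⊆ P) :
    (Fintype.card α).choose p ≤ ∑ c ∈ C, (Fintype.card α - #(R c)).choose (p - #(R c)) := by
  classical
  calc (Fintype.card α).choose p = #(powersetCard p (univ : Finset α)) := by simp
    _ ≤ #(C.biUnion fun c => ((univ \ R c).powersetCard (p - #(R c))).image (· ∪ R c)) := by
      refine card_le_card fun P hP => ?_
      obtain ⟨c, hc, hRP⟩ := hcover P (mem_powersetCard.mp hP).2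
      refine mem_biUnion.mpr ⟨c, hc, mem_image.mpr ⟨P \ R c, ?_, sdiff_union_of_subset hRP⟩⟩
      exact mem_powersetCard.mpr ⟨sdiff_subset_sdiff (subset_univ P) le_rfl,
        by rw [card_sdiff_of_subset hRP, (mem_powersetCard.mp hP).2]⟩
    _ ≤ ∑ c ∈ C, #(((univ \ R c).powersetCard (p - #(R c))).image (· ∪ R c)) :=
      card_biUnion_le
    _ ≤ _ := sum_le_sum fun c _ => card_image_le.trans (by rw [card_powersetCard, card_univ_sdiff])

-- Union bound: a pattern of type `j` spans `|σ j| + 1` points, so it lies in at most a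
-- `(p / N) ^ (|σ j| + 1)` fraction of the `p`-sets, and there are at most `K * N ^ |σ j|` of them.
theorem card_le_of_forall_exists_pattern {α ι : Type*} [Fintype α] [DecidableEq α] [Fintype ι]
    {σ : ι → Type*} [∀ j, Fintype (σ j)] {p h K : ℕ} (D : ∀ j, Finset ((σ j → α) × α))
    (hσ : ∀ j, Fintype.card (σ j) < h) (hhp : h ≤ p) (hpN : p ≤ Fintype.card α)
    (hD : ∀ j, ∀ gu ∈ D j, gu.1.Injective ∧ gu.2 ∉ Set.range gu.1)
    (hK : ∀ j g, #{gu ∈ D j | gu.1 = g} ≤ K)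
    (hcover : ∀ P : Finset α, #P = p → ∃ j, ∃ gu ∈ D j, insert gu.2 (univ.image gu.1) ⊆ P) :
    Fintype.card α ≤ Fintype.card ι * K * p ^ h := by
  classical
  set N := Fintype.card α
  have hunion := choose_le_sum_choose_of_forall_exists_subset (p := p) (univ.sigma D)
    (fun c => insert c.2.2 (univ.image c.2.1)) fun P hP => by
      obtain ⟨j, gu, hgu, hsub⟩ := hcover P hP
      exact ⟨⟨j, gu⟩, mem_sigma.mpr ⟨mem_univ _, hgu⟩, hsub⟩
  rw [sum_sigma] at hunion
  have hcolor (j : ι) : (∑ gu ∈ D j, (N - #(insert gu.2 (univ.image gu.1))).choose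
      (p - #(insert gu.2 (univ.image gu.1)))) * N ≤ K * p ^ h * N.choose p := by
    set w := Fintype.card (σ j) + 1
    have hwh : w ≤ h := hσ j
    have hR : ∀ gu ∈ D j, #(insert gu.2 (univ.image gu.1)) = w := fun gu hgu => by
      rw [card_insert_of_notMem (by simpa using (hD j gu hgu).2),
        card_image_of_injective _ (hD j gu hgu).1, card_univ]
    have hDj : #(D j) ≤ K * N ^ (w - 1) := calc
      #(D j) ≤ K * #((D j).image Prod.fst) := card_le_mul_card_image _ K fun g _ => hK j g
      _ ≤ K * N ^ (w - 1) :=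
        Nat.mul_le_mul_left K ((card_le_univ _).trans (by simp [w, N]))
    rw [sum_congr rfl fun gu hgu => by rw [hR gu hgu], sum_const, smul_eq_mul]
    calc #(D j) * (N - w).choose (p - w) * N
        ≤ K * N ^ (w - 1) * (N - w).choose (p - w) * N := by gcongr
      _ = K * (N ^ w * (N - w).choose (p - w)) := by
        rw [show w = w - 1 + 1 by omega, pow_succ]; simp only [Nat.add_sub_cancel]; ring
      _ ≤ K * (p ^ w * N.choose p) :=
        Nat.mul_le_mul_left K (pow_mul_choose_sub_le (hwh.trans hhp) hpN)
      _ ≤ K * p ^ h * N.choose p := by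
        rw [mul_assoc]
        exact Nat.mul_le_mul_left K (Nat.mul_le_mul_right _
          (Nat.pow_le_pow_right (by omega) hwh))
  have hmain : N.choose p * N ≤ N.choose p * (Fintype.card ι * K * p ^ h) := calc
    N.choose p * N ≤ ∑ j, (∑ gu ∈ D j, (N - #(insert gu.2 (univ.image gu.1))).choose
        (p - #(insert gu.2 (univ.image gu.1)))) * N := by
      rw [← sum_mul]; exact Nat.mul_le_mul_right N hunion
    _ ≤ ∑ _j : ι, K * p ^ h * N.choose p := sum_le_sum fun j _ => hcolor j
    _ = N.choose p * (Fintype.card ι * K * p ^ h) := by rw [sum_const, card_univ]; ring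
  exact Nat.le_of_mul_le_mul_left hmain (Nat.choose_pos hpN)

lemma ThreeGraph.three_le_card_verts {G : ThreeGraph} {e : Finset ℕ} (he : e ∈ G.edges) :
    3 ≤ #G.verts :=
  G.edge_card e he ▸ card_le_card (G.edge_sub e he)

def IsMonoCopy {N q : ℕ} (χ : Finset (Fin N) → Fin q) (i : Fin q) (G : ThreeGraph)
    (f : ℕ → Fin N) : Prop :=
  Set.InjOn f G.verts ∧ ∀ e ∈ G.edges, χ (e.image f) = i

lemma IsMonoCopy.monoCopy {N q : ℕ} {χ : Finset (Fin N) → Fin q} {i : Fin q} {G : ThreeGraph}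
    {f : ℕ → Fin N} (hf : IsMonoCopy χ i G f) : MonoCopy χ i G :=
  ⟨f, hf⟩

lemma RamseyProp.exists_isMonoCopy_mapsTo {q n N : ℕ} {Gs : Fin q → ThreeGraph}
    (hR : RamseyProp Gs n) (χ : Finset (Fin N) → Fin q) {Y : Finset (Fin N)} (hY : n ≤ #Y) :
    ∃ i f, IsMonoCopy χ i (Gs i) f ∧ Set.MapsTo f (Gs i).verts Y := by
  obtain ⟨emb⟩ := Function.Embedding.nonempty_of_card_le
    (show Fintype.card (Fin n) ≤ Fintype.card Y by simpa using hY)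
  let g : Fin n → Fin N := fun a => emb a
  have hg : g.Injective := Subtype.val_injective.comp emb.injective
  obtain ⟨i, f, hinj, hcol⟩ := hR fun s => χ (s.image g)
  refine ⟨i, g ∘ f, ⟨hg.comp_injOn hinj, fun e he => ?_⟩, fun x _ => (emb (f x)).2⟩
  simpa only [image_image] using hcol e he

lemma RamseyProp.mono {q n N : ℕ} {Gs : Fin q → ThreeGraph} (hR : RamseyProp Gs n)
    (hN : n ≤ N) : RamseyProp Gs N := fun χ =>
  have ⟨i, _, hf, _⟩ := hR.exists_isMonoCopy_mapsTo χ (Y := univ) (by simpa using hN)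
  ⟨i, hf.monoCopy⟩

lemma RamseyProp.of_nondegenerate {q t N : ℕ} {Gs : Fin q → ThreeGraph}
    (hsum : ∑ i, #(Gs i).verts ≤ t) (htN : 0 < q → t < N)
    (h : 0 < q → (∀ i, 3 ≤ #(Gs i).verts) → 3 * q ≤ t → RamseyProp Gs N) :
    RamseyProp Gs N := by
  intro χ
  have hq : 0 < q := Fin.pos (χ ∅)
  by_cases hedge : ∃ i, (Gs i).edges = ∅
  · obtain ⟨i, hi⟩ := hedge
    have : NeZero N := ⟨by have := htN hq; omega⟩
    have hle : #(Gs i).verts ≤ #(univ : Finset (Fin N)) := by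
      have := single_le_sum (fun j _ => Nat.zero_le #(Gs j).verts) (mem_univ i)
      simp only [card_univ, Fintype.card_fin]
      have := htN hq
      omega
    obtain ⟨f, -, hinj⟩ := exists_mapsTo_injOn_of_card_le hle
    exact ⟨i, f, hinj, by simp [hi]⟩
  · push Not at hedge
    have h3 : ∀ i, 3 ≤ #(Gs i).verts := fun i =>
      have ⟨_, he⟩ := hedge i
      ThreeGraph.three_le_card_verts he
    refine h hq h3 ?_ χ
    have := card_nsmul_le_sum univ (fun i => #(Gs i).verts) 3 fun i _ => h3 i
    simp only [card_univ, Fintype.card_fin, smul_eq_mul] at this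
    omega

lemma MemU.inU1 {G : ThreeGraph} (hG : MemU 1 G) : InU1 G := by
  cases hG with
  | one _ h => exact h
  | mono _ _ h =>
    cases h with
    | zero _ h =>
      obtain ⟨V₁, V₂, V₃, -, -, -, hV, hedge⟩ := h
      exact ⟨V₁, hV ▸ subset_union_left.trans subset_union_left, fun e he => (hedge e he).1⟩

lemma monoCopy_of_forall_pairwise_color {N q : ℕ} [NeZero N] (χ : Finset (Fin N) → Fin q)
    (i : Fin q) {G : ThreeGraph} {W : Finset ℕ} (hW : ∀ e ∈ G.edges, #(e ∩ W) = 1)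
    {Y T : Finset (Fin N)} (hYT : Disjoint Y T) (hWY : #W ≤ #Y) (hT : #(G.verts \ W) ≤ #T)
    (hcol : ∀ y ∈ Y, (T : Set (Fin N)).Pairwise fun a b => χ {a, b, y} = i) :
    MonoCopy χ i G := by
  obtain ⟨fW, hfWY, hfW⟩ := exists_mapsTo_injOn_of_card_le hWY
  obtain ⟨fB, hfBT, hfB⟩ := exists_mapsTo_injOn_of_card_le hT
  have hdiff : ∀ x ∈ G.verts, x ∉ W → x ∈ G.verts \ W := fun x hx hxW => mem_sdiff.mpr ⟨hx, hxW⟩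
  refine ⟨W.piecewise fW fB, ?_, fun e he => ?_⟩
  · refine Finset.injOn_piecewise (hfW.mono Set.inter_subset_right)
      (hfB.mono fun x hx => hdiff x hx.1 hx.2) (hfWY.mono_left Set.inter_subset_right)
      (fun x hx => hfBT (hdiff x hx.1 hx.2)) (disjoint_coe.mpr hYT)
  · obtain ⟨w, x, y, rfl, hw, hx, hy, hxy⟩ :=
      exists_eq_triple_of_card_inter_eq_one (G.edge_card e he) (hW e he)
    have hxG : x ∈ G.verts := G.edge_sub _ he (by simp)
    have hyG : y ∈ G.verts := G.edge_sub _ he (by simp)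
    have hrot : ({fW w, fB x, fB y} : Finset (Fin N)) = {fB x, fB y, fW w} := by
      ext; simp only [mem_insert, mem_singleton]; tauto
    simp only [image_insert, image_singleton, W.piecewise_eq_of_mem _ _ hw,
      W.piecewise_eq_of_notMem _ _ hx, W.piecewise_eq_of_notMem _ _ hy, hrot]
    exact hcol _ (hfWY hw) (hfBT (hdiff x hxG hx)) (hfBT (hdiff y hyG hy))
      (hfB.ne (hdiff x hxG hx) (hdiff y hyG hy) hxy)

theorem ramseyProp_of_inU1 {q h N : ℕ} (hq : 0 < q) {Gs : Fin q → ThreeGraph}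
    (hU : ∀ i, InU1 (Gs i)) (hcard : ∀ i, #(Gs i).verts ≤ h)
    (hN : (2 * q) ^ (q * h) + q * ((2 * q) ^ (q * h)).choose h * h ≤ N) :
    RamseyProp Gs N := by
  intro χ
  set p := (2 * q) ^ (q * h)
  have hhp : h ≤ p := calc
    h ≤ q * h := Nat.le_mul_of_pos_left h hq
    _ ≤ 2 ^ (q * h) := Nat.lt_two_pow_self.le
    _ ≤ p := Nat.pow_le_pow_left (by omega) _
  have hp : 0 < p := by positivity
  have : NeZero N := ⟨by omega⟩
  have : Nonempty (Fin q) := ⟨⟨0, hq⟩⟩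
  obtain ⟨P, -, hP⟩ := exists_subset_card_eq (s := (univ : Finset (Fin N))) (n := p)
    (by simp only [card_univ, Fintype.card_fin]; omega)
  have hlink (y : Fin N) :
      ∃ i, ∃ T ⊆ P, #T = h ∧ (T : Set (Fin N)).Pairwise fun a b => χ {a, b, y} = i :=
    exists_pairwise_color_eq hq (fun a b => χ {a, b, y}) (fun a b => by rw [insert_comm])
      hP.ge
  choose col T hTP hTh hTcol using hlink
  obtain ⟨⟨i, T₀⟩, hT₀, hfiber⟩ := exists_le_card_fiber_of_mul_le_card_of_maps_to
    (f := fun y => (col y, T y)) (s := univ \ P) (t := univ ×ˢ P.powersetCard h) (n := h)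
    (fun y _ => mem_product.mpr ⟨mem_univ _, mem_powersetCard.mpr ⟨hTP y, hTh y⟩⟩)
    (univ_nonempty.product (powersetCard_nonempty.mpr (hP ▸ hhp)))
    (by simp only [card_product, card_univ, Fintype.card_fin, card_powersetCard,
      card_sdiff_of_subset (subset_univ P), hP]; omega)
  obtain ⟨hT₀P, hT₀h⟩ := mem_powersetCard.mp (mem_product.mp hT₀).2
  obtain ⟨W, hWV, hW⟩ := hU i
  set Y := {y ∈ univ \ P | (col y, T y) = (i, T₀)}
  refine ⟨i, monoCopy_of_forall_pairwise_color χ i hW (Y := Y) (T := T₀) ?_ ?_ ?_ fun y hy => ?_⟩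
  · exact disjoint_of_subset_left (filter_subset _ _)
      (disjoint_of_subset_right hT₀P sdiff_disjoint)
  · exact (card_le_card hWV).trans ((hcard i).trans hfiber)
  · exact (card_le_card sdiff_subset).trans (hT₀h ▸ hcard i)
  · obtain ⟨hcol, hT⟩ := Prod.mk.inj (mem_filter.mp hy).2
    exact hcol ▸ hT ▸ hTcol y

def rootExtensions {N q : ℕ} (χ : Finset (Fin N) → Fin q) (i : Fin q) (H : ThreeGraph) (v : ℕ)
    (f : ℕ → Fin N) : Finset (Fin N) :=
  {u | ∀ e ∈ H.edges, v ∈ e → χ (e.image (Function.update f v u)) = i}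

lemma mem_rootExtensions_of_eqOn {N q : ℕ} {χ : Finset (Fin N) → Fin q} {i : Fin q}
    {H : ThreeGraph} {v : ℕ} {f g : ℕ → Fin N} (hg : IsMonoCopy χ i H g)
    (hfg : Set.EqOn f g (H.verts.erase v)) : g v ∈ rootExtensions χ i H v f := by
  refine mem_filter.mpr ⟨mem_univ _, fun e he _ => ?_⟩
  have hfg' : Set.EqOn (Function.update f v (g v)) g e := fun x hx => by
    by_cases hxv : x = v
    · rw [hxv, Function.update_self]
    · rw [Function.update_of_ne hxv]
      exact hfg (mem_erase.mpr ⟨hxv, H.edge_sub e he hx⟩)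
  rw [image_congr hfg']
  exact hg.2 e he

def GluesAt (G H F : ThreeGraph) (v : ℕ) : Prop :=
  ∀ {N q : ℕ} (χ : Finset (Fin N) → Fin q) (i : Fin q) (fH fF : ℕ → Fin N),
    IsMonoCopy χ i H fH → IsMonoCopy χ i F fF →
    Set.MapsTo fF F.verts ↑(rootExtensions χ i H v fH \ (H.verts.erase v).image fH) →
    MonoCopy χ i G

namespace Reducible

variable {G H F : ThreeGraph}

lemma card_verts_lt_left (hred : Reducible G H F) : #H.verts < #G.verts := by
  obtain ⟨U, v, hUG, hU2, -, -, -, hHV, -⟩ := hred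
  have := card_union_le (G.verts \ U) {v}
  rw [card_sdiff_of_subset hUG, card_singleton, ← hHV] at this
  have := card_le_card hUG
  omega

lemma card_verts_lt_right (hred : Reducible G H F) : #F.verts < #G.verts := by
  obtain ⟨U, v, -, -, hUG, -, -, -, -, hFV, -⟩ := hred
  exact hFV ▸ hUG

theorem exists_gluesAt (hred : Reducible G H F) : ∃ v ∈ H.verts, GluesAt G H F v := by
  obtain ⟨U, v, -, -, -, hcoll, hvG, hHV, hHE, hFV, hFE⟩ := hred
  refine ⟨v, by simp [hHV], fun χ i fH fF hfH hfF hmaps => ?_⟩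
  have hGH : ∀ x ∈ G.verts, x ∉ U → x ∈ H.verts.erase v := fun x hx hxU =>
    mem_erase.mpr ⟨ne_of_mem_of_not_mem hx hvG, hHV ▸ mem_union_left _ (mem_sdiff.mpr ⟨hx, hxU⟩)⟩
  refine ⟨U.piecewise fF fH, ?_, fun e he => ?_⟩
  · exact Finset.injOn_piecewise (hfF.1.mono fun x hx => hFV ▸ hx.2)
      (hfH.1.mono fun x hx => mem_of_mem_erase (hGH x hx.1 hx.2))
      (hmaps.mono_left fun x hx => hFV ▸ hx.2)
      (fun x hx => mem_image_of_mem fH (hGH x hx.1 hx.2)) (disjoint_coe.mpr sdiff_disjoint)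
  have he3 := G.edge_card e he
  have hcases : #(e ∩ U) = 0 ∨ #(e ∩ U) = 1 ∨ #(e ∩ U) = 3 := by
    have := card_le_card (inter_subset_left (s₁ := e) (s₂ := U))
    have := hcoll e he
    omega
  rcases hcases with h0 | h1 | h3
  · have heU : e ∩ U = ∅ := card_eq_zero.mp h0
    have heH : e ∈ H.edges := hHE ▸ mem_union_left _ (mem_filter.mpr ⟨he, heU⟩)
    have hfe : Set.EqOn (U.piecewise fF fH) fH e := fun x hx =>
      U.piecewise_eq_of_notMem _ _ (disjoint_left.mp (disjoint_iff_inter_eq_empty.mpr heU) hx)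
    rw [image_congr hfe]
    exact hfH.2 e heH
  · obtain ⟨u, x, y, rfl, hu, hx, hy, -⟩ := exists_eq_triple_of_card_inter_eq_one he3 h1
    have hxv : x ≠ v := ne_of_mem_of_not_mem (G.edge_sub _ he (by simp)) hvG
    have hyv : y ≠ v := ne_of_mem_of_not_mem (G.edge_sub _ he (by simp)) hvG
    -- collapsing `U` turns `e` into `{x, y, v}`, and `fF u` is an admissible position for `v`
    have he' : ({x, y, v} : Finset ℕ) ∈ H.edges := by
      refine hHE ▸ mem_union_right _ (mem_image.mpr ⟨_, mem_filter.mpr ⟨he, h1⟩, ?_⟩)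
      ext z
      simp only [mem_union, mem_sdiff, mem_insert, mem_singleton]
      grind
    have hext := (mem_filter.mp (mem_sdiff.mp (hmaps (hFV ▸ hu))).1).2 _ he' (by simp)
    simp only [image_insert, image_singleton, Function.update_of_ne hxv,
      Function.update_of_ne hyv, Function.update_self] at hext
    simp only [image_insert, image_singleton, U.piecewise_eq_of_mem _ _ hu,
      U.piecewise_eq_of_notMem _ _ hx, U.piecewise_eq_of_notMem _ _ hy]
    rwa [insert_comm, pair_comm]
  · have heU : e ⊆ U := inter_eq_left.mp (eq_of_subset_of_card_le inter_subset_left (by omega))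
    have hfe : Set.EqOn (U.piecewise fF fH) fF e := fun x hx => U.piecewise_eq_of_mem _ _ (heU hx)
    rw [image_congr hfe]
    exact hfF.2 e (hFE ▸ mem_filter.mpr ⟨he, heU⟩)

end Reducible

lemma MemU.exists_rootedSplit {m : ℕ} {G : ThreeGraph} (hG : MemU (m + 2) G)
    (hne : G.verts.Nonempty) :
    ∃ H F v, MemU (m + 1) H ∧ v ∈ H.verts ∧ #H.verts ≤ #G.verts ∧
      (H = G ∨ #H.verts < #G.verts ∧ #F.verts < #G.verts ∧ MemU (m + 2) F ∧ GluesAt G H F v) := by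
  cases hG with
  | mono _ _ hlow =>
    obtain ⟨v, hv⟩ := hne
    exact ⟨G, G, v, hlow, hv, le_rfl, Or.inl rfl⟩
  | reduce _ _ H F hred hH hF =>
    obtain ⟨v, hv, hglue⟩ := hred.exists_gluesAt
    exact ⟨H, F, v, hH, hv, hred.card_verts_lt_left.le,
      Or.inr ⟨hred.card_verts_lt_left, hred.card_verts_lt_right, hF, hglue⟩⟩

theorem exists_isMonoCopy_lt_card_rootExtensions {N q p h K : ℕ} (χ : Finset (Fin N) → Fin q)
    {Hs : Fin q → ThreeGraph} {v : Fin q → ℕ} (hv : ∀ j, v j ∈ (Hs j).verts)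
    (hcard : ∀ j, #(Hs j).verts ≤ h) (hR : RamseyProp Hs p) (hhp : h ≤ p) (hpN : p ≤ N)
    (hN : q * K * p ^ h < N) :
    ∃ j f, IsMonoCopy χ j (Hs j) f ∧ K < #(rootExtensions χ j (Hs j) (v j) f) := by
  classical
  by_contra! hsmall
  let σ (j : Fin q) : Finset ℕ := (Hs j).verts.erase (v j)
  let D (j : Fin q) : Finset ((σ j → Fin N) × Fin N) :=
    {gu | ∃ f, IsMonoCopy χ j (Hs j) f ∧ (∀ x : σ j, f x = gu.1 x) ∧ f (v j) = gu.2}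
  have hD (j : Fin q) (gu) (hgu : gu ∈ D j) : gu.1.Injective ∧ gu.2 ∉ Set.range gu.1 := by
    obtain ⟨f, hf, hfg, hfu⟩ := (mem_filter.mp hgu).2
    refine ⟨fun a b hab => Subtype.ext (hf.1 (mem_of_mem_erase a.2) (mem_of_mem_erase b.2)
      (by rw [hfg, hfg, hab])), fun ⟨a, ha⟩ => ne_of_mem_erase a.2 (hf.1 (mem_of_mem_erase a.2)
      (hv j) (by rw [hfg, hfu, ha]))⟩
  have hK (j : Fin q) (g : σ j → Fin N) : #{gu ∈ D j | gu.1 = g} ≤ K := by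
    obtain hempty | ⟨gu₀, hgu₀⟩ := eq_empty_or_nonempty {gu ∈ D j | gu.1 = g}
    · simp [hempty]
    obtain ⟨hgu₀D, rfl⟩ := mem_filter.mp hgu₀
    obtain ⟨f₀, hf₀, hf₀g, -⟩ := (mem_filter.mp hgu₀D).2
    refine (card_le_card_of_injOn Prod.snd (fun gu hgu => ?_) fun gu hgu gu' hgu' h =>
      Prod.ext ((mem_filter.mp hgu).2.trans (mem_filter.mp hgu').2.symm) h).trans (hsmall j f₀ hf₀)
    obtain ⟨hguD, hgu₁⟩ := mem_filter.mp hgu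
    obtain ⟨f, hf, hfg, hfu⟩ := (mem_filter.mp hguD).2
    rw [← hfu]
    exact mem_rootExtensions_of_eqOn hf fun x hx => by
      rw [hf₀g ⟨x, hx⟩, hfg ⟨x, hx⟩, hgu₁]
  have hcover (P : Finset (Fin N)) (hP : #P = p) :
      ∃ j, ∃ gu ∈ D j, insert gu.2 (univ.image gu.1) ⊆ P := by
    obtain ⟨j, f, hf, hfP⟩ := hR.exists_isMonoCopy_mapsTo χ hP.ge
    refine ⟨j, (fun x => f x, f (v j)), mem_filter.mpr ⟨mem_univ _, f, hf, fun _ => rfl, rfl⟩, ?_⟩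
    refine insert_subset (hfP (hv j)) fun y hy => ?_
    obtain ⟨x, -, rfl⟩ := mem_image.mp hy
    exact hfP (mem_of_mem_erase x.2)
  have := card_le_of_forall_exists_pattern D (fun j => ?_) hhp (by simpa using hpN) hD hK hcover
  · simp only [Fintype.card_fin] at this
    omega
  · rw [Fintype.card_coe, card_erase_of_mem (hv j)]
    have := card_pos.mpr ⟨v j, hv j⟩
    have := hcard j
    omega

theorem ramseyProp_of_gluesAt {q p n h N : ℕ} {Gs Hs Fs : Fin q → ThreeGraph} {v : Fin q → ℕ}
    (hv : ∀ j, v j ∈ (Hs j).verts) (hcard : ∀ j, #(Hs j).verts ≤ h)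
    (hsplit : ∀ j, Hs j = Gs j ∨
      GluesAt (Gs j) (Hs j) (Fs j) (v j) ∧ RamseyProp (Function.update Gs j (Fs j)) n)
    (hH : RamseyProp Hs p) (hhp : h ≤ p) (hpN : p ≤ N) (hN : q * (n + h) * p ^ h < N) :
    RamseyProp Gs N := by
  intro χ
  obtain ⟨j, fH, hfH, hext⟩ :=
    exists_isMonoCopy_lt_card_rootExtensions χ hv hcard hH hhp hpN hN
  obtain hHG | ⟨hglue, hF⟩ := hsplit j
  · exact ⟨j, hHG ▸ hfH.monoCopy⟩
  have hX : n ≤ #(rootExtensions χ j (Hs j) (v j) fH \ ((Hs j).verts.erase (v j)).image fH) := by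
    have := le_card_sdiff (((Hs j).verts.erase (v j)).image fH) (rootExtensions χ j (Hs j) (v j) fH)
    have := (card_image_le (s := (Hs j).verts.erase (v j)) (f := fH)).trans
      (card_erase_le.trans (hcard j))
    omega
  obtain ⟨i, fF, hfF, hmaps⟩ := hF.exists_isMonoCopy_mapsTo χ hX
  obtain rfl | hij := eq_or_ne i j
  · rw [Function.update_self] at hfF hmaps
    exact ⟨i, hglue χ i fH fF hfH hfF hmaps⟩
  · rw [Function.update_of_ne hij] at hfF
    exact ⟨i, hfF.monoCopy⟩

lemma lt_pow_mul_self {b E t : ℕ} (hb : 1 < b) (hE : 0 < E) : t < b ^ (E * t) :=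
  (Nat.lt_pow_self hb).trans_le (Nat.pow_le_pow_right (by omega) (Nat.le_mul_of_pos_left t hE))

lemma ramseyBound_one_arith {q h t : ℕ} (hq : 0 < q) (hh : 3 ≤ h) (ht : 3 * q ≤ t) :
    (2 * q) ^ (q * h) + q * ((2 * q) ^ (q * h)).choose h * h ≤ (q * h) ^ (h ^ 2 * t) := by
  have hb : 3 ≤ q * h := by nlinarith
  have hp : (2 * q) ^ (q * h) ≤ (q * h) ^ (q * h) := Nat.pow_le_pow_left (by nlinarith) _
  have hexp : q * h ≤ q * h ^ 2 + 1 := by nlinarith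
  have hexp' : q * h ^ 2 + 2 ≤ h ^ 2 * t := by nlinarith
  set b := q * h
  calc (2 * q) ^ (q * h) + q * ((2 * q) ^ (q * h)).choose h * h
      ≤ b ^ (q * h ^ 2 + 1) + b ^ (q * h ^ 2 + 1) := by
        refine add_le_add (hp.trans (Nat.pow_le_pow_right (by omega) hexp)) ?_
        calc q * ((2 * q) ^ (q * h)).choose h * h = b * ((2 * q) ^ (q * h)).choose h := by ring
          _ ≤ b * (b ^ (q * h)) ^ h :=
            Nat.mul_le_mul_left b ((Nat.choose_le_pow _ _).trans (Nat.pow_le_pow_left hp h))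
          _ = b ^ (q * h ^ 2 + 1) := by ring
    _ ≤ b * b ^ (q * h ^ 2 + 1) := by rw [← two_mul]; exact Nat.mul_le_mul_right _ (by omega)
    _ = b ^ (q * h ^ 2 + 2) := by ring
    _ ≤ b ^ (h ^ 2 * t) := Nat.pow_le_pow_right (by omega) hexp'

lemma ramseyBound_succ_succ_arith {q h t a : ℕ} (hq : 0 < q) (hh : 3 ≤ h) (ht : 2 ≤ t)
    (htq : t ≤ q * h) (ha : 0 < a) :
    h ≤ (q * h) ^ (a * (t - 1)) ∧
    (q * h) ^ (a * (t - 1)) ≤ (q * h) ^ (a * (q * h ^ 2) * t) ∧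
    q * ((q * h) ^ (a * (q * h ^ 2) * (t - 1)) + h) * ((q * h) ^ (a * (t - 1))) ^ h <
      (q * h) ^ (a * (q * h ^ 2) * t) := by
  have hb : 3 ≤ q * h := by nlinarith
  have hhb : h ≤ q * h := Nat.le_mul_of_pos_left h hq
  have hq3 : 2 * q < (q * h) ^ 3 := by
    have : 27 ≤ h ^ 3 := by simpa using Nat.pow_le_pow_left hh 3
    have : q * 27 ≤ q * (q ^ 2 * h ^ 3) := Nat.mul_le_mul_left q
      (this.trans (Nat.le_mul_of_pos_left _ (by positivity)))
    rw [show (q * h) ^ 3 = q * (q ^ 2 * h ^ 3) by ring]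
    omega
  have ht1 : 0 < t - 1 := by omega
  have hE : a * (q * h ^ 2) * (t - 1) ≠ 0 := by positivity
  have hat : a * (t - 1) ≤ a * (q * h ^ 2) * t := by
    calc a * (t - 1) ≤ a * t := Nat.mul_le_mul_left a (Nat.sub_le t 1)
      _ ≤ a * (q * h ^ 2) * t := Nat.mul_le_mul_right t (Nat.le_mul_of_pos_right a (by positivity))
  have hexp : a * (q * h ^ 2) * (t - 1) + (a * (t - 1) * h + 3) ≤ a * (q * h ^ 2) * t := by
    have : a * h * t ≤ a * h * (q * h) := Nat.mul_le_mul_left _ htq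
    have : 3 ≤ a * h := by nlinarith
    have e1 : a * (t - 1) * h + a * h = a * h * t := by
      rw [show t = t - 1 + 1 by omega]; simp only [Nat.add_sub_cancel]; ring
    have e2 : a * (q * h ^ 2) * (t - 1) + a * (q * h ^ 2) = a * (q * h ^ 2) * t := by
      rw [show t = t - 1 + 1 by omega]; simp only [Nat.add_sub_cancel]; ring
    have e3 : a * h * (q * h) = a * (q * h ^ 2) := by ring
    omega
  set b := q * h
  set E := a * (q * h ^ 2)
  refine ⟨hhb.trans (Nat.le_self_pow (by positivity) b), Nat.pow_le_pow_right (by omega) hat, ?_⟩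
  calc q * (b ^ (E * (t - 1)) + h) * (b ^ (a * (t - 1))) ^ h
      ≤ q * (b ^ (E * (t - 1)) + b ^ (E * (t - 1))) * (b ^ (a * (t - 1))) ^ h := by
        gcongr; exact hhb.trans (Nat.le_self_pow hE b)
    _ = 2 * q * b ^ (E * (t - 1) + a * (t - 1) * h) := by rw [← pow_mul, pow_add]; ring
    _ < b ^ 3 * b ^ (E * (t - 1) + a * (t - 1) * h) := by gcongr
    _ = b ^ (E * (t - 1) + (a * (t - 1) * h + 3)) := by ring
    _ ≤ b ^ (E * t) := Nat.pow_le_pow_right (by omega) hexp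

lemma sum_card_verts_update_lt {q : ℕ} {Gs : Fin q → ThreeGraph} {j : Fin q} {F : ThreeGraph}
    (hF : #F.verts < #(Gs j).verts) :
    ∑ i, #(Function.update Gs j F i).verts < ∑ i, #(Gs i).verts := by
  refine sum_lt_sum (fun i _ => ?_) ⟨j, mem_univ _, by simpa using hF⟩
  obtain rfl | hij := eq_or_ne i j
  · simpa using hF.le
  · simp [hij]

-- `t` only bounds `∑ v(Gᵢ)`, so that the bound passes to the smaller families of the induction.
def RamseyBound (ℓ h : ℕ) : Prop :=
  ∀ q t (Gs : Fin q → ThreeGraph), (∀ i, MemU ℓ (Gs i)) → (∀ i, #(Gs i).verts ≤ h) →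
    ∑ i, #(Gs i).verts ≤ t → t ≤ q * h →
    RamseyProp Gs ((q * h) ^ (q ^ (ℓ - 1) * h ^ (2 * ℓ) * t))

theorem ramseyBound_one {h : ℕ} (hh : 3 ≤ h) : RamseyBound 1 h := by
  intro q t Gs hU hcard hsum _
  rw [Nat.sub_self, pow_zero, one_mul, mul_one]
  refine RamseyProp.of_nondegenerate hsum
    (fun hq => lt_pow_mul_self (by nlinarith) (by positivity)) fun hq _ ht => ?_
  exact ramseyProp_of_inU1 hq (fun i => (hU i).inU1) hcard (ramseyBound_one_arith hq hh ht)

theorem RamseyBound.succ_succ {m h : ℕ} (hh : 3 ≤ h) (hlow : RamseyBound (m + 1) h) :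
    RamseyBound (m + 2) h := by
  intro q t
  induction t using Nat.strong_induction_on with
  | _ t ih =>
  intro Gs hU hcard hsum htq
  set a := q ^ m * h ^ (2 * (m + 1))
  have hexp : q ^ (m + 1 - 1) * h ^ (2 * (m + 1)) = a := by rw [Nat.add_sub_cancel]
  have hexp' : q ^ (m + 2 - 1) * h ^ (2 * (m + 2)) = a * (q * h ^ 2) := by
    rw [show m + 2 - 1 = m + 1 by omega]; ring
  rw [hexp']
  refine RamseyProp.of_nondegenerate hsum
    (fun hq => lt_pow_mul_self (by nlinarith) (by positivity)) fun hq h3 ht => ?_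
  by_cases hall : ∀ i, MemU (m + 1) (Gs i)
  · refine (hexp ▸ hlow q t Gs hall hcard hsum htq).mono (Nat.pow_le_pow_right (by nlinarith) ?_)
    exact Nat.mul_le_mul_right t (Nat.le_mul_of_pos_right a (by positivity))
  push Not at hall
  obtain ⟨i₀, hi₀⟩ := hall
  choose Hs Fs v hHlow hv hHG hsplit using fun j =>
    (hU j).exists_rootedSplit (card_pos.mp (by have := h3 j; omega))
  have hcardH (j : Fin q) : #(Hs j).verts ≤ h := (hHG j).trans (hcard j)
  have hsumH : ∑ j, #(Hs j).verts ≤ t - 1 := by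
    have := sum_lt_sum (fun j _ => hHG j) ⟨i₀, mem_univ _,
      ((hsplit i₀).resolve_left fun hHG => hi₀ (hHG ▸ hHlow i₀)).1⟩
    omega
  have hH := hexp ▸ hlow q (t - 1) Hs hHlow hcardH hsumH (by omega)
  obtain ⟨hhp, hpN, hN⟩ :=
    ramseyBound_succ_succ_arith hq hh (by omega) htq (by positivity : 0 < a)
  refine ramseyProp_of_gluesAt (Fs := Fs) hv hcardH (fun j => ?_) hH hhp hpN hN
  obtain hHG | ⟨-, hFG, hF, hglue⟩ := hsplit j
  · exact Or.inl hHG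
  have hsum' := sum_card_verts_update_lt hFG
  refine Or.inr ⟨hglue, hexp' ▸ ih (t - 1) (by omega) _ ?_ ?_ (by omega) (by omega)⟩
  · exact (Function.forall_update_iff Gs fun _ G => MemU (m + 2) G).mpr ⟨hF, fun i _ => hU i⟩
  · exact (Function.forall_update_iff Gs fun _ G => #G.verts ≤ h).mpr
      ⟨hFG.le.trans (hcard j), fun i _ => hcard i⟩

theorem ramseyBound {h : ℕ} (hh : 3 ≤ h) : ∀ m, RamseyBound (m + 1) h
  | 0 => ramseyBound_one hh
  | m + 1 => (ramseyBound hh m).succ_succ hh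

/-- Let `ℓ ≥ 1`, `h ≥ 3`, and let `G₁, …, G_q ∈ 𝒰_ℓ` be 3-graphs each on at
most `h` vertices, with `t = Σᵢ v(Gᵢ)`. Then
`r(G₁, …, G_q) ≤ (q·h) ^ (q^(ℓ−1) · h^(2ℓ) · t)`. -/
theorem stmt7 (ℓ h q : ℕ) (hℓ : 1 ≤ ℓ) (hh : 3 ≤ h) (Gs : Fin q → ThreeGraph)
    (hU : ∀ i, MemU ℓ (Gs i)) (hcard : ∀ i, (Gs i).verts.card ≤ h)
    (t : ℕ) (ht : t = ∑ i, (Gs i).verts.card) :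
    ramseyNumber Gs ≤ (q * h) ^ (q ^ (ℓ - 1) * h ^ (2 * ℓ) * t) := by
  obtain ⟨m, rfl⟩ : ∃ m, ℓ = m + 1 := ⟨ℓ - 1, by omega⟩
  refine Nat.sInf_le (ramseyBound hh m q t Gs hU hcard ht.ge ?_)
  simpa [ht, mul_comm] using sum_le_card_nsmul univ _ h fun i _ => hcard i
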